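/- Let ρ be a real-valued C² function on an open subset of ℂⁿ × ℂᵐ and let w be a point where ρ(w) = 0, the fiberwise complex Hessian (ρ_{p q̄}(w)) is positive definite, and the fiber gradient (ρ_p(w))_{1≤p≤m} is nonzero (so that |∂ρ|²(w) > 0). Then for all 1 ≤ j,k ≤ n, evaluating everything at w: ρ_{j k̄} + Σ_p ν_j^p \overline{ρ_{k p̄}} + Σ_q \overline{ν_k^q} ρ_{j q̄} + Σ_{p,q} ν_j^p \overline{ν_k^q} ρ_{p q̄} = ( ρ_{j k̄} − Σ_{p,s} ρ_{j s̄}ρ^{s p̄}\overline{ρ_{k p̄}} ) + ( ρ_j − Σ_s ρ_{j s̄}ρ^s )( ρ_{k̄} − Σ_p \overline{ρ_{k p̄}}ρ^{p̄} )/|∂ρ|². -/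

import Mathlib

open MeasureTheory Complex
open scoped ComplexOrder

noncomputable section

/-- `ℂⁿ` with the Euclidean metric. -/
abbrev CC (n : ℕ) := EuclideanSpace ℂ (Fin n)

/-- `ℂⁿ × ℂᵐ`. -/
abbrev Pt (n m : ℕ) := CC n × CC m

instance (n : ℕ) : MeasurableSpace (CC n) := borel _
instance (n : ℕ) : BorelSpace (CC n) := ⟨rfl⟩
instance (n : ℕ) : InnerProductSpace ℝ (CC n) := InnerProductSpace.rclikeToReal ℂ (CC n)

/-- The Wirtinger derivative `∂f/∂v` of `f` at `x` in the (complex) direction `v`. -/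
def wdz {E : Type*} [NormedAddCommGroup E] [NormedSpace ℂ E]
    (f : E → ℂ) (x v : E) : ℂ :=
  (1 / 2 : ℂ) * ((fderiv ℝ f x) v - Complex.I * (fderiv ℝ f x) (Complex.I • v))

/-- The conjugate Wirtinger derivative `∂f/∂v̄`. -/
def wdzbar {E : Type*} [NormedAddCommGroup E] [NormedSpace ℂ E]
    (f : E → ℂ) (x v : E) : ℂ :=
  (1 / 2 : ℂ) * ((fderiv ℝ f x) v + Complex.I * (fderiv ℝ f x) (Complex.I • v))

/-- The Levi form `Σ f_{a b̄} v_a v̄_b` of `f` at `x` evaluated at the direction `v`. -/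
def levi {E : Type*} [NormedAddCommGroup E] [NormedSpace ℂ E]
    (f : E → ℂ) (x v : E) : ℂ :=
  wdz (fun y => wdzbar f y v) x v

/-- `t`-coordinate direction in `ℂⁿ × ℂᵐ`. -/
def et {n m : ℕ} (j : Fin n) : Pt n m := (EuclideanSpace.single j 1, 0)

/-- `z`-coordinate direction in `ℂⁿ × ℂᵐ`. -/
def ez {n m : ℕ} (p : Fin m) : Pt n m := (0, EuclideanSpace.single p 1)

/-- A real-valued function viewed as a complex-valued one. -/
def rc {E : Type*} (ρ : E → ℝ) : E → ℂ := fun w => (ρ w : ℂ)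

/-- `ρ_j := ∂ρ/∂t_j`. -/
def Dt {n m : ℕ} (ρ : Pt n m → ℝ) (j : Fin n) (w : Pt n m) : ℂ := wdz (rc ρ) w (et j)

/-- `ρ_{k̄} := ∂ρ/∂t̄_k`. -/
def Dtbar {n m : ℕ} (ρ : Pt n m → ℝ) (k : Fin n) (w : Pt n m) : ℂ := wdzbar (rc ρ) w (et k)

/-- `ρ_p := ∂ρ/∂z_p`. -/
def Dz {n m : ℕ} (ρ : Pt n m → ℝ) (p : Fin m) (w : Pt n m) : ℂ := wdz (rc ρ) w (ez p)

/-- `ρ_{p̄} := ∂ρ/∂z̄_p`. -/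
def Dzbar {n m : ℕ} (ρ : Pt n m → ℝ) (p : Fin m) (w : Pt n m) : ℂ := wdzbar (rc ρ) w (ez p)

/-- `ρ_{j k̄} := ∂²ρ/∂t_j∂t̄_k`. -/
def Dttbar {n m : ℕ} (ρ : Pt n m → ℝ) (j k : Fin n) (w : Pt n m) : ℂ :=
  wdz (fun x => wdzbar (rc ρ) x (et k)) w (et j)

/-- `ρ_{j q̄} := ∂²ρ/∂t_j∂z̄_q`. -/
def Dtzbar {n m : ℕ} (ρ : Pt n m → ℝ) (j : Fin n) (q : Fin m) (w : Pt n m) : ℂ :=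
  wdz (fun x => wdzbar (rc ρ) x (ez q)) w (et j)

/-- `ρ_{p q̄} := ∂²ρ/∂z_p∂z̄_q`, the fiberwise complex Hessian. -/
def Dzzbar {n m : ℕ} (ρ : Pt n m → ℝ) (p q : Fin m) (w : Pt n m) : ℂ :=
  wdz (fun x => wdzbar (rc ρ) x (ez q)) w (ez p)

/-- The fiberwise complex Hessian matrix `(ρ_{p q̄})`. -/
def fibHess {n m : ℕ} (ρ : Pt n m → ℝ) (w : Pt n m) : Matrix (Fin m) (Fin m) ℂ :=
  Matrix.of fun p q => Dzzbar ρ p q w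

/-- The inverse matrix `(ρ^{p q̄})` of the fiberwise complex Hessian. -/
def fibHessInv {n m : ℕ} (ρ : Pt n m → ℝ) (w : Pt n m) : Matrix (Fin m) (Fin m) ℂ :=
  (fibHess ρ w)⁻¹

/-- `ρ^p := Σ_q ρ^{p q̄} ρ_q`. -/
def rup {n m : ℕ} (ρ : Pt n m → ℝ) (p : Fin m) (w : Pt n m) : ℂ :=
  ∑ q, fibHessInv ρ w p q * Dz ρ q w

/-- `|∂ρ|² := Σ_p ρ_{p̄} ρ^p`. -/
def dnorm2 {n m : ℕ} (ρ : Pt n m → ℝ) (w : Pt n m) : ℂ :=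
  ∑ p, Dzbar ρ p w * rup ρ p w

/-- The vector field coefficients `ν_j^p`. -/
def nu {n m : ℕ} (ρ : Pt n m → ℝ) (j : Fin n) (p : Fin m) (w : Pt n m) : ℂ :=
  Dt ρ j w * (starRingEnd ℂ) (rup ρ p w) / ((ρ w : ℂ) - dnorm2 ρ w)
    - ∑ q, (Dtzbar ρ j q w * fibHessInv ρ w q p
        + Dtzbar ρ j q w * rup ρ q w * (starRingEnd ℂ) (rup ρ p w) / ((ρ w : ℂ) - dnorm2 ρ w))

/-- The fiber of `Ω` over `t`. -/
def fib {n m : ℕ} (Ω : Set (Pt n m)) (t : CC n) : Set (CC m) := {z | (t, z) ∈ Ω}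

/-- A family of bounded domains over a domain `U ⊂ ℂⁿ`. -/
structure IsFamilyOfBddDomains {n m : ℕ} (U : Set (CC n)) (Ω : Set (Pt n m)) : Prop where
  isOpen_base : IsOpen U
  isConnected_base : IsConnected U
  isOpen_total : IsOpen Ω
  isConnected_total : IsConnected Ω
  proj_mem : ∀ w ∈ Ω, w.1 ∈ U
  proj_surj : ∀ t ∈ U, ∃ z, (t, z) ∈ Ω
  bounded_fib : ∀ t ∈ U, Bornology.IsBounded (fib Ω t)

/-- `ρ` is a `C^k` (boundary) defining function of the family `Ω`. -/
structure IsDefiningFunction {n m : ℕ} (U : Set (CC n)) (Ω : Set (Pt n m))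
    (ρ : Pt n m → ℝ) (k : ℕ) : Prop where
  contDiff : ContDiff ℝ k ρ
  eq_sublevel : Ω = {w : Pt n m | w.1 ∈ U ∧ ρ w < 0}
  grad_ne : ∀ t ∈ U, ∀ z ∈ frontier (fib Ω t), fderiv ℝ (fun z' => ρ (t, z')) z ≠ 0

/-- `Ω` has the plurisubharmonic defining function `ρ`: `ρ` is a `C⁴` defining function,
plurisubharmonic on a neighborhood of the closure of `Ω`, and `ρ(t,·)` is strictly
plurisubharmonic on the closure of each fiber. -/
structure IsPshDefining {n m : ℕ} (U : Set (CC n)) (Ω : Set (Pt n m))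
    (ρ : Pt n m → ℝ) : Prop where
  defining : IsDefiningFunction U Ω ρ 4
  psh_nhd : ∃ W, IsOpen W ∧ closure Ω ⊆ W ∧ ∀ w ∈ W, ∀ v : Pt n m, 0 ≤ levi (rc ρ) w v
  fib_strict : ∀ t ∈ U, ∀ z ∈ closure (fib Ω t), ∀ v : CC m, v ≠ 0 →
    0 < levi (fun z' => (ρ (t, z') : ℂ)) z v

/-- `ρ` exhibits `Ω` as a strictly pseudoconvex family: `ρ` is a `C⁴` defining function which is
strictly plurisubharmonic on a neighborhood of the closure of `Ω`. -/
structure IsSPCDefining {n m : ℕ} (U : Set (CC n)) (Ω : Set (Pt n m))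
    (ρ : Pt n m → ℝ) : Prop where
  defining : IsDefiningFunction U Ω ρ 4
  strict_psh_nhd : ∃ W, IsOpen W ∧ closure Ω ⊆ W ∧
    ∀ w ∈ W, ∀ v : Pt n m, v ≠ 0 → 0 < levi (rc ρ) w v

/-- Chern connection coefficient matrix `Γ_a = (Γ_{aλ}^μ)` of a metric `h` in the
direction `a`; it is determined by `Σ_μ Γ_{aλ}^μ h_{μ ν̄} = ∂h_{λ ν̄}/∂w_a`. -/
def Gam {E : Type*} [NormedAddCommGroup E] [NormedSpace ℂ E] {r : ℕ}
    (h : E → Matrix (Fin r) (Fin r) ℂ) (a w : E) : Matrix (Fin r) (Fin r) ℂ :=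
  (Matrix.of fun l ν => wdz (fun x => h x l ν) w a) * (h w)⁻¹

/-- Curvature coefficients `A_{abλμ} = Σ_α (−∂Γ_{aλ}^α/∂w̄_b) h_{α μ̄}`. -/
def curvA {E : Type*} [NormedAddCommGroup E] [NormedSpace ℂ E] {r : ℕ}
    (h : E → Matrix (Fin r) (Fin r) ℂ) (a b w : E) : Matrix (Fin r) (Fin r) ℂ :=
  (Matrix.of fun l α => - wdzbar (fun x => Gam h a x l α) w b) * (h w)

/-- Nakano (semi-)positivity at a point, with respect to the directions `e`. -/
def NakanoPosAt {E : Type*} [NormedAddCommGroup E] [NormedSpace ℂ E] {r : ℕ}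
    {ι : Type*} [Fintype ι] (h : E → Matrix (Fin r) (Fin r) ℂ) (e : ι → E) (w : E) : Prop :=
  ∀ u : ι → Fin r → ℂ,
    0 ≤ ∑ a, ∑ b, ∑ l, ∑ μ, curvA h (e a) (e b) w l μ * u a l * (starRingEnd ℂ) (u b μ)

/-- Nakano strict positivity at a point, with respect to the directions `e`. -/
def NakanoStrictPosAt {E : Type*} [NormedAddCommGroup E] [NormedSpace ℂ E] {r : ℕ}
    {ι : Type*} [Fintype ι] (h : E → Matrix (Fin r) (Fin r) ℂ) (e : ι → E) (w : E) : Prop :=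
  ∀ u : ι → Fin r → ℂ, u ≠ 0 →
    0 < ∑ a, ∑ b, ∑ l, ∑ μ, curvA h (e a) (e b) w l μ * u a l * (starRingEnd ℂ) (u b μ)

/-- All coordinate directions of `ℂⁿ × ℂᵐ`. -/
def dirTZ {n m : ℕ} : Fin n ⊕ Fin m → Pt n m := Sum.elim et ez

/-- The pointwise inner product `⟨a,b⟩_h = Σ_{λ,μ} a_λ \overline{b_μ} h_{λ μ̄}`. -/
def hInner {r : ℕ} (H : Matrix (Fin r) (Fin r) ℂ) (a b : Fin r → ℂ) : ℂ :=
  ∑ l, ∑ μ, a l * (starRingEnd ℂ) (b μ) * H l μ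

/-- The Chern covariant derivative `(D_a u)_α = ∂u_α/∂a + Σ_λ Γ_{aλ}^α u_λ`. -/
def covD {E : Type*} [NormedAddCommGroup E] [NormedSpace ℂ E] {r : ℕ}
    (h : E → Matrix (Fin r) (Fin r) ℂ) (a : E) (u : E → Fin r → ℂ) (w : E) (α : Fin r) : ℂ :=
  wdz (fun x => u x α) w a + ∑ l, Gam h a w l α * u w l

/-- The operator `L_j u := D^F_{t_j} u + Σ_p D^F_{z_p}(ν_j^p u)`. -/
def Lop {n m r : ℕ} (h : Pt n m → Matrix (Fin r) (Fin r) ℂ) (ρ : Pt n m → ℝ) (j : Fin n)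
    (u : Pt n m → Fin r → ℂ) (w : Pt n m) (α : Fin r) : ℂ :=
  covD h (et j) u w α + ∑ p, covD h (ez p) (fun x β => nu ρ j p x * u x β) w α

/-- `H(h^F)_{jkλμ}`. -/
def Hcoef {n m r : ℕ} (h : Pt n m → Matrix (Fin r) (Fin r) ℂ) (ρ : Pt n m → ℝ)
    (j k : Fin n) (l μ : Fin r) (w : Pt n m) : ℂ :=
  curvA h (et j) (et k) w l μ + ∑ p, nu ρ j p w * curvA h (ez p) (et k) w l μ
    + ∑ q, (starRingEnd ℂ) (nu ρ k q w) * curvA h (et j) (ez q) w l μ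
    + ∑ p, ∑ q, nu ρ j p w * (starRingEnd ℂ) (nu ρ k q w) * curvA h (ez p) (ez q) w l μ

/-- `H₀(ρ)_{j k̄} := ρ_{j k̄} − Σ_{p,s} ρ_{j s̄} ρ^{s p̄} \overline{ρ_{k p̄}}`. -/
def H0 {n m : ℕ} (ρ : Pt n m → ℝ) (j k : Fin n) (w : Pt n m) : ℂ :=
  Dttbar ρ j k w - ∑ p, ∑ s, Dtzbar ρ j s w * fibHessInv ρ w s p * (starRingEnd ℂ) (Dtzbar ρ k p w)

/-- `H(ρ)_{j k̄}`. -/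
def Hrho {n m : ℕ} (ρ : Pt n m → ℝ) (j k : Fin n) (w : Pt n m) : ℂ :=
  H0 ρ j k w +
    (Dt ρ j w - ∑ s, Dtzbar ρ j s w * rup ρ s w) *
      (Dtbar ρ k w - ∑ p, (starRingEnd ℂ) (Dtzbar ρ k p w) * (starRingEnd ℂ) (rup ρ p w)) /
        dnorm2 ρ w

/-- `w` is the projection `π_⊥ g` of `g` onto the orthogonal complement of the space of
square-integrable fiberwise holomorphic `ℂ^r`-valued functions in the weighted `L²`-space
of the fiber `Ω_t`. -/
def IsPerpProj {n m r : ℕ} (h : Pt n m → Matrix (Fin r) (Fin r) ℂ) (Ω : Set (Pt n m))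
    (t : CC n) (g w : CC m → Fin r → ℂ) : Prop :=
  (∀ l, DifferentiableOn ℂ (fun z => g z l - w z l) (fib Ω t)) ∧
  (∀ l, MemLp (fun z => g z l - w z l) 2 (volume.restrict (fib Ω t))) ∧
  (∀ l, MemLp (fun z => w z l) 2 (volume.restrict (fib Ω t))) ∧
  (∀ f : CC m → Fin r → ℂ, (∀ l, DifferentiableOn ℂ (fun z => f z l) (fib Ω t)) →
    (∀ l, MemLp (fun z => f z l) 2 (volume.restrict (fib Ω t))) →
    ∫ z in fib Ω t, hInner (h (t, z)) (w z) (f z) = 0)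

/-- Plurisubharmonicity (upper semicontinuity plus the sub-mean value inequality on
complex discs) of a real-valued function on a set. -/
def IsPshOn {E : Type*} [NormedAddCommGroup E] [NormedSpace ℂ E]
    (f : E → ℝ) (s : Set E) : Prop :=
  UpperSemicontinuousOn f s ∧
  ∀ (a v : E) (R : ℝ), 0 < R → (∀ c : ℂ, ‖c‖ ≤ R → a + c • v ∈ s) →
    f a ≤ (1 / (2 * Real.pi)) *
      ∫ θ in (0:ℝ)..(2 * Real.pi), f (a + ((R : ℂ) * Complex.exp (θ * Complex.I)) • v)

/-! Write the left side as `L(X_j, X_k)`, where `L` is the complex Hessian of `ρ` at `w` and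
`X_j = ∂/∂t_j + Σ_p ν_j^p ∂/∂z_p`. Since `ρ(w) = 0`, `ν_j = c_j ρ^{p̄} − Σ_q ρ_{j q̄} ρ^{q p̄}` with
`c_j = −(ρ_j − Σ_s ρ_{j s̄} ρ^s)/|∂ρ|²`. The shift by `−Σ_q ρ_{j q̄} ρ^{q p̄}` completes the square
in the fiber directions (a Schur complement), which leaves `H₀` plus `L` evaluated on the fiber
vectors `c_j ρ^{p̄}`, `c_k ρ^{p̄}`; as `(ρ_{p q̄}) ρ^· = ρ_·`, the latter is
`c_j c̄_k \overline{|∂ρ|²}`. Finally `ρ_{k̄} = \overline{ρ_k}` because `ρ` is real. -/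

lemma fderiv_rc {E : Type*} [NormedAddCommGroup E] [NormedSpace ℝ E] (ρ : E → ℝ) (x : E) :
    fderiv ℝ (rc ρ) x = Complex.ofRealCLM.comp (fderiv ℝ ρ x) := by
  by_cases hρ : DifferentiableAt ℝ ρ x
  · exact (Complex.ofRealCLM.hasFDerivAt.comp x hρ.hasFDerivAt).fderiv
  · have hrc : ¬ DifferentiableAt ℝ (rc ρ) x := fun h =>
      hρ (by simpa [rc, Function.comp_def] using Complex.reCLM.differentiableAt.comp x h)
    rw [fderiv_zero_of_not_differentiableAt hρ, fderiv_zero_of_not_differentiableAt hrc,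
      ContinuousLinearMap.comp_zero]

lemma wdzbar_rc {E : Type*} [NormedAddCommGroup E] [NormedSpace ℂ E] (ρ : E → ℝ) (x v : E) :
    wdzbar (rc ρ) x v = starRingEnd ℂ (wdz (rc ρ) x v) := by
  simp only [wdz, wdzbar, fderiv_rc, ContinuousLinearMap.coe_comp, Function.comp_apply,
    Complex.ofRealCLM_apply, map_mul, map_sub, map_div₀, map_one, map_ofNat,
    Complex.conj_ofReal, Complex.conj_I]
  ring

section BlockForm

open Matrix

variable {ι : Type*} [Fintype ι]

/-- `L(e + u, e' + v)` for the sesquilinear form `L` on `ℂ ⊕ ℂ^ι` with `L(e, e') = D`,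
`L(e, f_q) = a q`, `L(f_p, e') = conj (b p)` and `L(f_p, f_q) = H p q`. -/
def blockForm (D : ℂ) (a b : ι → ℂ) (H : Matrix ι ι ℂ) (u v : ι → ℂ) : ℂ :=
  D + u ⬝ᵥ star b + star v ⬝ᵥ a + u ⬝ᵥ (H *ᵥ star v)

theorem blockForm_eq_sum (D : ℂ) (a b : ι → ℂ) (H : Matrix ι ι ℂ) (u v : ι → ℂ) :
    blockForm D a b H u v = D + (∑ p, u p * starRingEnd ℂ (b p))
      + (∑ q, starRingEnd ℂ (v q) * a q) + ∑ p, ∑ q, u p * starRingEnd ℂ (v q) * H p q := by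
  simp only [blockForm, dotProduct, mulVec, Finset.mul_sum, Pi.star_apply, starRingEnd_apply]
  congr 1
  exact Finset.sum_congr rfl fun p _ => Finset.sum_congr rfl fun q _ => by ring

theorem vecMul_dotProduct_star_eq_sum (a b : ι → ℂ) (M : Matrix ι ι ℂ) :
    (a ᵥ* M) ⬝ᵥ star b = ∑ p, ∑ t, a t * M t p * starRingEnd ℂ (b p) := by
  simp only [dotProduct, vecMul, Finset.sum_mul, Pi.star_apply, starRingEnd_apply]

variable [DecidableEq ι]

/-- Schur complement: shifting both arguments by `-(· ᵥ* H⁻¹)` cancels the mixed terms. -/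
theorem blockForm_sub_vecMul_inv {H : Matrix ι ι ℂ} (hH : H.IsHermitian) (hdet : IsUnit H.det)
    (D : ℂ) (a b u v : ι → ℂ) :
    blockForm D a b H (u - a ᵥ* H⁻¹) (v - b ᵥ* H⁻¹)
      = D - (a ᵥ* H⁻¹) ⬝ᵥ star b + u ⬝ᵥ (H *ᵥ star v) := by
  have hstar : star (b ᵥ* H⁻¹) = H⁻¹ *ᵥ star b := by
    rw [star_vecMul, hH.inv.eq]
  have hcancel : H *ᵥ (H⁻¹ *ᵥ star b) = star b := by
    rw [mulVec_mulVec, mul_nonsing_inv _ hdet, one_mulVec]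
  have hcancel' : (a ᵥ* H⁻¹) ⬝ᵥ (H *ᵥ star v) = a ⬝ᵥ star v := by
    rw [dotProduct_mulVec, vecMul_vecMul, nonsing_inv_mul _ hdet, vecMul_one]
  have hswap : (H⁻¹ *ᵥ star b) ⬝ᵥ a = (a ᵥ* H⁻¹) ⬝ᵥ star b := by
    rw [dotProduct_comm, dotProduct_mulVec]
  simp only [blockForm, star_sub, hstar, mulVec_sub, hcancel, sub_dotProduct, dotProduct_sub,
    hcancel', hswap]
  rw [dotProduct_comm (star v) a]
  ring

/-- The vector `(ν_j^p)_p` at a point where `ρ = 0`, for `H = (ρ_{p q̄})`, `z = (ρ_p)`,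
`a = (ρ_{j q̄})` and `T = ρ_j`; then `H⁻¹ *ᵥ z = (ρ^p)` and `star z ⬝ᵥ (H⁻¹ *ᵥ z) = |∂ρ|²`. -/
def fiberCorrection (H : Matrix ι ι ℂ) (z a : ι → ℂ) (T : ℂ) : ι → ℂ :=
  ((T - a ⬝ᵥ (H⁻¹ *ᵥ z)) / -(star z ⬝ᵥ (H⁻¹ *ᵥ z))) • star (H⁻¹ *ᵥ z) - a ᵥ* H⁻¹

theorem blockForm_fiberCorrection {H : Matrix ι ι ℂ} (hH : H.IsHermitian) (hdet : IsUnit H.det)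
    {z : ι → ℂ} (hz : star z ⬝ᵥ (H⁻¹ *ᵥ z) ≠ 0) (D : ℂ) (a b : ι → ℂ) (S T : ℂ) :
    blockForm D a b H (fiberCorrection H z a S) (fiberCorrection H z b T)
      = D - (a ᵥ* H⁻¹) ⬝ᵥ star b
        + (S - a ⬝ᵥ (H⁻¹ *ᵥ z)) * star (T - b ⬝ᵥ (H⁻¹ *ᵥ z)) / (star z ⬝ᵥ (H⁻¹ *ᵥ z)) := by
  have hHr : H *ᵥ (H⁻¹ *ᵥ z) = z := by
    rw [mulVec_mulVec, mul_nonsing_inv _ hdet, one_mulVec]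
  have hz' : star (star z ⬝ᵥ (H⁻¹ *ᵥ z)) ≠ 0 := star_ne_zero.mpr hz
  rw [fiberCorrection, fiberCorrection, blockForm_sub_vecMul_inv hH hdet, star_smul, star_star,
    mulVec_smul, hHr, smul_dotProduct, dotProduct_smul, star_dotProduct _ z]
  simp only [smul_eq_mul, star_div₀, star_neg]
  field_simp

end BlockForm

open Matrix

lemma dnorm2_eq_dotProduct {n m : ℕ} (ρ : Pt n m → ℝ) (w : Pt n m) :
    dnorm2 ρ w = star (fun p => Dz ρ p w) ⬝ᵥ (fibHessInv ρ w *ᵥ fun p => Dz ρ p w) :=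
  Finset.sum_congr rfl fun p _ => by rw [Dzbar, wdzbar_rc]; rfl

lemma nu_eq_fiberCorrection {n m : ℕ} (ρ : Pt n m → ℝ) (j : Fin n) (w : Pt n m)
    (hzero : ρ w = 0) :
    (fun p => nu ρ j p w) = fiberCorrection (fibHess ρ w) (fun p => Dz ρ p w)
      (fun q => Dtzbar ρ j q w) (Dt ρ j w) := by
  funext p
  simp only [nu, fiberCorrection, hzero, Complex.ofReal_zero, zero_sub, dnorm2_eq_dotProduct,
    Pi.sub_apply, Pi.smul_apply, smul_eq_mul, Pi.star_apply, starRingEnd_apply, vecMul,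
    Finset.sum_add_distrib, ← Finset.sum_div, ← Finset.sum_mul, fibHessInv, rup, mulVec, dotProduct]
  ring

theorem boundary_Hessian_identity_general {n m : ℕ}
    (ρ : Pt n m → ℝ) (w : Pt n m)
    (hzero : ρ w = 0) (hpos : (fibHess ρ w).PosDef)
    (hgrad : (fun p => Dz ρ p w) ≠ 0) :
    ∀ j k : Fin n,
      Dttbar ρ j k w + (∑ p, nu ρ j p w * (starRingEnd ℂ) (Dtzbar ρ k p w))
        + (∑ q, (starRingEnd ℂ) (nu ρ k q w) * Dtzbar ρ j q w)
        + (∑ p, ∑ q, nu ρ j p w * (starRingEnd ℂ) (nu ρ k q w) * Dzzbar ρ p q w)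
      = (Dttbar ρ j k w
          - ∑ p, ∑ t, Dtzbar ρ j t w * fibHessInv ρ w t p * (starRingEnd ℂ) (Dtzbar ρ k p w))
        + (Dt ρ j w - ∑ t, Dtzbar ρ j t w * rup ρ t w)
          * (Dtbar ρ k w - ∑ p, (starRingEnd ℂ) (Dtzbar ρ k p w) * (starRingEnd ℂ) (rup ρ p w))
          / dnorm2 ρ w := by
  intro j k
  have hdet : IsUnit (fibHess ρ w).det := (isUnit_iff_isUnit_det _).mp hpos.isUnit
  have hd : star (fun p => Dz ρ p w) ⬝ᵥ ((fibHess ρ w)⁻¹ *ᵥ fun p => Dz ρ p w) ≠ 0 :=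
    (hpos.inv.dotProduct_mulVec_pos hgrad).ne'
  have key := blockForm_fiberCorrection hpos.isHermitian hdet hd (Dttbar ρ j k w)
    (fun q => Dtzbar ρ j q w) (fun q => Dtzbar ρ k q w) (Dt ρ j w) (Dt ρ k w)
  rw [← nu_eq_fiberCorrection ρ j w hzero, ← nu_eq_fiberCorrection ρ k w hzero,
    blockForm_eq_sum, vecMul_dotProduct_star_eq_sum] at key
  refine key.trans ?_
  rw [Dtbar, wdzbar_rc, dnorm2_eq_dotProduct]
  simp only [star_sub, dotProduct, star_sum, star_mul', fibHessInv, rup, mulVec, Dt,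
    starRingEnd_apply]

/-- Let `ρ` be a real-valued `C²` function on an open subset of `ℂⁿ × ℂᵐ`
and `w` a point with `ρ(w) = 0`, positive definite fiberwise complex Hessian and nonzero
fiber gradient.  Then for all `j, k`:
`ρ_{j k̄} + Σ_p ν_j^p \overline{ρ_{k p̄}} + Σ_q \overline{ν_k^q} ρ_{j q̄}
   + Σ_{p,q} ν_j^p \overline{ν_k^q} ρ_{p q̄}
 = (ρ_{j k̄} − Σ_{p,s} ρ_{j s̄} ρ^{s p̄} \overline{ρ_{k p̄}})
   + (ρ_j − Σ_s ρ_{j s̄} ρ^s)(ρ_{k̄} − Σ_p \overline{ρ_{k p̄}} ρ^{p̄})/|∂ρ|²` at `w`. -/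
theorem boundary_Hessian_identity {n m : ℕ} (s : Set (Pt n m)) (hs : IsOpen s)
    (ρ : Pt n m → ℝ) (hρ : ContDiffOn ℝ 2 ρ s) (w : Pt n m) (hw : w ∈ s)
    (hzero : ρ w = 0) (hpos : (fibHess ρ w).PosDef)
    (hgrad : (fun p => Dz ρ p w) ≠ 0) :
    ∀ j k : Fin n,
      Dttbar ρ j k w + (∑ p, nu ρ j p w * (starRingEnd ℂ) (Dtzbar ρ k p w))
        + (∑ q, (starRingEnd ℂ) (nu ρ k q w) * Dtzbar ρ j q w)
        + (∑ p, ∑ q, nu ρ j p w * (starRingEnd ℂ) (nu ρ k q w) * Dzzbar ρ p q w)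
      = (Dttbar ρ j k w
          - ∑ p, ∑ t, Dtzbar ρ j t w * fibHessInv ρ w t p * (starRingEnd ℂ) (Dtzbar ρ k p w))
        + (Dt ρ j w - ∑ t, Dtzbar ρ j t w * rup ρ t w)
          * (Dtbar ρ k w - ∑ p, (starRingEnd ℂ) (Dtzbar ρ k p w) * (starRingEnd ℂ) (rup ρ p w))
          / dnorm2 ρ w :=
  boundary_Hessian_identity_general ρ w hzero hpos hgrad

end
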